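/- arXiv:2212.10832 — 7 statements merged into one kernel-verified Lean document; each statement's English description precedes it below -/
import Mathlib

section
/- Let A be an m×n complex matrix, M (m×m) and N (n×n) Hermitian positive definite matrices, and B an m×n matrix such that A = U B V*, where U (m×m) satisfies U* M U = I and V (n×n) satisfies V* N^{-1} V = I. Then A†_{M,N} = N^{-1} V B† U* M. -/
open Matrix Filter Topology
open scoped ComplexOrder

/-- The four Penrose equations for the ordinary Moore-Penrose inverse. -/
def IsMP {m n : ℕ} (A : Matrix (Fin m) (Fin n) ℂ) (X : Matrix (Fin n) (Fin m) ℂ) : Prop :=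
  A * X * A = A ∧ X * A * X = X ∧ (A * X)ᴴ = A * X ∧ (X * A)ᴴ = X * A

/-- The four equations characterizing the weighted Moore-Penrose inverse of `A`
with respect to the weights `(M, N)`. -/
def IsWMP {m n : ℕ} (M : Matrix (Fin m) (Fin m) ℂ) (N : Matrix (Fin n) (Fin n) ℂ)
    (A : Matrix (Fin m) (Fin n) ℂ) (X : Matrix (Fin n) (Fin m) ℂ) : Prop :=
  A * X * A = A ∧ X * A * X = X ∧ (M * A * X)ᴴ = M * A * X ∧ (N * X * A)ᴴ = N * X * A

/-! A weighted inverse is unique: `A X` and `X A` are idempotents that are self-adjoint for the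
inner products given by `M` and `N`, and such an idempotent is determined by its range (for `A X`)
or by its kernel (for `X A`). For existence, `Uᴴ M U = 1` and `Vᴴ N⁻¹ V = 1` turn the weighted
Penrose equations for `A = U B Vᴴ` into the ordinary ones for `B`: with `Z = N⁻¹ V Y Uᴴ M`, one
gets `M A Z = (Uᴴ M)ᴴ (B Y) (Uᴴ M)` and `N Z A = V (Y B) Vᴴ`. -/

namespace Matrix

variable {n R : Type*} [Fintype n] [DecidableEq n] [CommRing R] [StarRing R]

theorem eq_of_isHermitian_mul_of_mul_eq_right {H P Q : Matrix n n R} (hH : H.IsHermitian)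
    (hHu : IsUnit H) (hP : (H * P).IsHermitian) (hQ : (H * Q).IsHermitian) (hPQ : P * Q = Q)
    (hQP : Q * P = P) : P = Q := by
  refine hHu.mul_left_cancel ?_
  calc H * P = H * Q * P := by rw [Matrix.mul_assoc, hQP]
    _ = (H * Q)ᴴ * P := by rw [hQ.eq]
    _ = Qᴴ * (H * P) := by rw [conjTranspose_mul, hH.eq, Matrix.mul_assoc]
    _ = (H * P * Q)ᴴ := by rw [conjTranspose_mul, hP.eq]
    _ = H * Q := by rw [Matrix.mul_assoc, hPQ, hQ.eq]

theorem eq_of_isHermitian_mul_of_mul_eq_left {H P Q : Matrix n n R} (hH : H.IsHermitian)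
    (hHu : IsUnit H) (hP : (H * P).IsHermitian) (hQ : (H * Q).IsHermitian) (hPQ : P * Q = P)
    (hQP : Q * P = Q) : P = Q := by
  refine hHu.mul_left_cancel ?_
  calc H * P = (H * (P * Q))ᴴ := by rw [hPQ, hP.eq]
    _ = Qᴴ * (H * P) := by rw [← Matrix.mul_assoc, conjTranspose_mul, hP.eq]
    _ = (H * Q)ᴴ * P := by rw [conjTranspose_mul, hH.eq, Matrix.mul_assoc]
    _ = H * Q := by rw [hQ.eq, Matrix.mul_assoc, hQP]

end Matrix

theorem IsWMP.eq {m n : ℕ} {M : Matrix (Fin m) (Fin m) ℂ} {N : Matrix (Fin n) (Fin n) ℂ}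
    {A : Matrix (Fin m) (Fin n) ℂ} {X Z : Matrix (Fin n) (Fin m) ℂ}
    (hM : M.IsHermitian) (hMu : IsUnit M) (hN : N.IsHermitian) (hNu : IsUnit N)
    (hX : IsWMP M N A X) (hZ : IsWMP M N A Z) : X = Z := by
  obtain ⟨hAXA, hXAX, hMAX, hNXA⟩ := hX
  obtain ⟨hAZA, hZAZ, hMAZ, hNZA⟩ := hZ
  have hAX : A * X = A * Z := by
    refine eq_of_isHermitian_mul_of_mul_eq_right hM hMu ?_ ?_ ?_ ?_
    · rwa [← Matrix.mul_assoc]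
    · rwa [← Matrix.mul_assoc]
    · rw [← Matrix.mul_assoc, hAXA]
    · rw [← Matrix.mul_assoc, hAZA]
  have hXA : X * A = Z * A := by
    refine eq_of_isHermitian_mul_of_mul_eq_left hN hNu ?_ ?_ ?_ ?_
    · rwa [← Matrix.mul_assoc]
    · rwa [← Matrix.mul_assoc]
    · rw [Matrix.mul_assoc, ← Matrix.mul_assoc A, hAZA]
    · rw [Matrix.mul_assoc, ← Matrix.mul_assoc A, hAXA]
  calc X = X * A * X := hXAX.symm
    _ = Z * A * Z := by rw [hXA, Matrix.mul_assoc, hAX, ← Matrix.mul_assoc]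
    _ = Z := hZAZ

theorem IsMP.isWMP_mul_mul {m n : ℕ} {B : Matrix (Fin m) (Fin n) ℂ}
    {M U : Matrix (Fin m) (Fin m) ℂ} {N V : Matrix (Fin n) (Fin n) ℂ} {Y : Matrix (Fin n) (Fin m) ℂ}
    (hY : IsMP B Y) (hM : M.IsHermitian) (hN : IsUnit N.det)
    (hU : Uᴴ * M * U = 1) (hV : Vᴴ * N⁻¹ * V = 1) :
    IsWMP M N (U * B * Vᴴ) (N⁻¹ * V * Y * Uᴴ * M) := by
  obtain ⟨hBYB, hYBY, hBY, hYB⟩ := hY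
  have cancelU {k : ℕ} (C : Matrix (Fin m) (Fin k) ℂ) : Uᴴ * (M * (U * C)) = C := by
    rw [← Matrix.mul_assoc, ← Matrix.mul_assoc, hU, Matrix.one_mul]
  have cancelV {k : ℕ} (C : Matrix (Fin n) (Fin k) ℂ) : Vᴴ * (N⁻¹ * (V * C)) = C := by
    rw [← Matrix.mul_assoc, ← Matrix.mul_assoc, hV, Matrix.one_mul]
  have cancelBY {k : ℕ} (C : Matrix (Fin n) (Fin k) ℂ) : B * (Y * (B * C)) = B * C := by
    rw [← Matrix.mul_assoc, ← Matrix.mul_assoc, hBYB]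
  have cancelYB {k : ℕ} (C : Matrix (Fin m) (Fin k) ℂ) : Y * (B * (Y * C)) = Y * C := by
    rw [← Matrix.mul_assoc, ← Matrix.mul_assoc, hYBY]
  have hMAZ : M * (U * B * Vᴴ) * (N⁻¹ * V * Y * Uᴴ * M) = (Uᴴ * M)ᴴ * (B * Y) * (Uᴴ * M) := by
    simp only [conjTranspose_mul, conjTranspose_conjTranspose, hM.eq, Matrix.mul_assoc,
      cancelV]
  have hNZA : N * (N⁻¹ * V * Y * Uᴴ * M) * (U * B * Vᴴ) = V * (Y * B) * Vᴴ := by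
    simp only [Matrix.mul_assoc, cancelU, mul_nonsing_inv_cancel_left (h := hN)]
  refine ⟨?_, ?_, ?_, ?_⟩
  · simp only [Matrix.mul_assoc, cancelU, cancelV, cancelBY]
  · simp only [Matrix.mul_assoc, cancelU, cancelV, cancelYB]
  · rw [hMAZ]
    exact isHermitian_conjTranspose_mul_mul _ hBY
  · rw [hNZA]
    exact isHermitian_mul_mul_conjTranspose _ hYB

/-- if A = U B V* with U* M U = I and V* N⁻¹ V = I,
then A†_{M,N} = N⁻¹ V B† U* M. -/
theorem stmt_1 {m n : ℕ} (A B : Matrix (Fin m) (Fin n) ℂ)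
    (M U : Matrix (Fin m) (Fin m) ℂ) (N V : Matrix (Fin n) (Fin n) ℂ)
    (hM : M.PosDef) (hN : N.PosDef)
    (hU : Uᴴ * M * U = 1) (hV : Vᴴ * N⁻¹ * V = 1)
    (hA : A = U * B * Vᴴ)
    (Y : Matrix (Fin n) (Fin m) ℂ) (hY : IsMP B Y) :
    IsWMP M N A (N⁻¹ * V * Y * Uᴴ * M) ∧
      ∀ X, IsWMP M N A X → X = N⁻¹ * V * Y * Uᴴ * M := by
  subst hA
  have hZ := hY.isWMP_mul_mul hM.isHermitian ((isUnit_iff_isUnit_det N).1 hN.isUnit) hU hV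
  exact ⟨hZ, fun X hX => hX.eq hM.isHermitian hM.isUnit hN.isHermitian hN.isUnit hZ⟩
end

section
/- Let A be an m×n complex matrix with M (m×m) and N (n×n) Hermitian positive definite. Define the weighted conjugate transpose A^# = N^{-1} A* M. Then A†_{M,N} = lim_{λ → 0+} (λI + A^# A)^{-1} A^#. -/
open Matrix Filter Topology
open scoped ComplexOrder

/-!
Write `A^# = N⁻¹ Aᴴ M` and `B = A^# A = N⁻¹ (Aᴴ M A)`. Conjugating by `N^{1/2}` turns `B` into the
positive semidefinite matrix `N^{-1/2} Aᴴ M A N^{-1/2}`, so `B = P D P⁻¹` with `D` diagonal and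
nonnegative. Hence `(λ + B)⁻¹ B = P (λ + D)⁻¹ D P⁻¹` converges as `λ → 0⁺` to `E = P 1_{D ≠ 0} P⁻¹`,
and `E B = B`. The Penrose equations give `B X = A^#` and `X = A^# W = B X W` with
`W = M⁻¹ Xᴴ N X`, so `(λ + B)⁻¹ A^# = (λ + B)⁻¹ B X → E X = E B X W = B X W = X`.
-/

lemma tendsto_inv_add_mul_nhdsGT_zero {𝕜 : Type*} [RCLike 𝕜] {d : ℝ} (hd : 0 ≤ d) :
    Tendsto (fun lam : ℝ => ((lam : 𝕜) + d)⁻¹ * d) (𝓝[>] 0)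
      (𝓝 (if d = 0 then 0 else 1)) := by
  rcases hd.eq_or_lt with rfl | hd
  · simp
  · have hd' : (d : 𝕜) ≠ 0 := RCLike.ofReal_ne_zero.mpr hd.ne'
    have hcont : ContinuousAt (fun lam : ℝ => ((lam : 𝕜) + d)⁻¹ * d) 0 := by
      fun_prop (disch := simpa using hd')
    simpa [hd.ne', hd'] using hcont.tendsto.mono_left nhdsWithin_le_nhds

namespace Matrix

variable {𝕜 ι : Type*} [RCLike 𝕜] [Fintype ι] [DecidableEq ι]

lemma inv_smul_one_add_diagonal_mul_diagonal {lam : ℝ} (hlam : 0 < lam) {d : ι → ℝ}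
    (hd : 0 ≤ d) :
    ((lam : 𝕜) • 1 + diagonal (RCLike.ofReal ∘ d))⁻¹ * diagonal (RCLike.ofReal ∘ d) =
      diagonal fun i => ((lam : 𝕜) + d i)⁻¹ * d i := by
  have hne : ∀ i, (lam : 𝕜) + d i ≠ 0 := fun i => by
    exact_mod_cast (add_pos_of_pos_of_nonneg hlam (hd i)).ne'
  have hinv : (diagonal fun i => (lam : 𝕜) + d i)⁻¹ = diagonal fun i => ((lam : 𝕜) + d i)⁻¹ := by
    refine inv_eq_left_inv ?_
    rw [diagonal_mul_diagonal, ← diagonal_one]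
    exact congrArg diagonal (funext fun i => inv_mul_cancel₀ (hne i))
  rw [smul_one_eq_diagonal, diagonal_add]
  simp only [Function.comp_apply, hinv, diagonal_mul_diagonal]

lemma inv_conj {P : Matrix ι ι 𝕜} (hP : IsUnit P) (T : Matrix ι ι 𝕜) :
    (P * T * P⁻¹)⁻¹ = P * T⁻¹ * P⁻¹ := by
  rw [Matrix.mul_inv_rev, Matrix.mul_inv_rev,
    nonsing_inv_nonsing_inv _ ((isUnit_iff_isUnit_det P).mp hP), Matrix.mul_assoc]

lemma smul_one_add_conj {P : Matrix ι ι 𝕜} (hP : IsUnit P) (c : 𝕜) (D : Matrix ι ι 𝕜) :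
    c • 1 + P * D * P⁻¹ = P * (c • 1 + D) * P⁻¹ := by
  rw [Matrix.mul_add, Matrix.add_mul, mul_smul_comm, Matrix.mul_one, smul_mul_assoc,
    mul_nonsing_inv _ ((isUnit_iff_isUnit_det P).mp hP)]

lemma conj_mul_conj {P : Matrix ι ι 𝕜} (hP : IsUnit P) (S T : Matrix ι ι 𝕜) :
    P * S * P⁻¹ * (P * T * P⁻¹) = P * (S * T) * P⁻¹ := by
  simp only [Matrix.mul_assoc, nonsing_inv_mul_cancel_left _ _ ((isUnit_iff_isUnit_det P).mp hP)]

theorem tendsto_inv_smul_one_add_conj_diagonal_mul {P : Matrix ι ι 𝕜} (hP : IsUnit P)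
    {d : ι → ℝ} (hd : 0 ≤ d) :
    Tendsto (fun lam : ℝ => ((lam : 𝕜) • 1 + P * diagonal (RCLike.ofReal ∘ d) * P⁻¹)⁻¹ *
        (P * diagonal (RCLike.ofReal ∘ d) * P⁻¹)) (𝓝[>] 0)
      (𝓝 (P * diagonal (fun i => if d i = 0 then 0 else 1) * P⁻¹)) := by
  have hdiag : Tendsto (fun lam : ℝ => diagonal fun i => ((lam : 𝕜) + d i)⁻¹ * d i) (𝓝[>] 0)
      (𝓝 (diagonal fun i => if d i = 0 then 0 else 1)) :=
    (continuous_id.matrix_diagonal.tendsto _).comp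
      (tendsto_pi_nhds.mpr fun i => tendsto_inv_add_mul_nhdsGT_zero (hd i))
  refine ((hdiag.const_mul P).mul_const P⁻¹).congr'
    (eventually_nhdsWithin_of_forall fun lam hlam => ?_)
  dsimp only
  rw [smul_one_add_conj hP, inv_conj hP, conj_mul_conj hP,
    inv_smul_one_add_diagonal_mul_diagonal hlam hd]

lemma conj_diagonal_indicator_mul_conj_diagonal {P : Matrix ι ι 𝕜} (hP : IsUnit P) (d : ι → ℝ) :
    P * diagonal (fun i => if d i = 0 then 0 else 1) * P⁻¹ *
        (P * diagonal (RCLike.ofReal ∘ d) * P⁻¹) = P * diagonal (RCLike.ofReal ∘ d) * P⁻¹ := by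
  rw [conj_mul_conj hP, diagonal_mul_diagonal]
  congr 3 with i
  split_ifs with h <;> simp [h]

open scoped MatrixOrder in
theorem PosDef.exists_inv_mul_eq_conj_diagonal {N H : Matrix ι ι 𝕜} (hN : N.PosDef)
    (hH : H.PosSemidef) :
    ∃ (P : Matrix ι ι 𝕜) (d : ι → ℝ), IsUnit P ∧ 0 ≤ d ∧
      N⁻¹ * H = P * diagonal (RCLike.ofReal ∘ d) * P⁻¹ := by
  set S := CFC.sqrt N
  have hSS : S * S = N := CFC.sqrt_mul_sqrt_self N hN.posSemidef.nonneg
  have hS : IsUnit S.det :=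
    (isUnit_iff_isUnit_det S).mp ((CFC.isUnit_sqrt_iff N hN.posSemidef.nonneg).mpr hN.isUnit)
  have hSinv : (S⁻¹)ᴴ = S⁻¹ := (CFC.sqrt_nonneg N).posSemidef.isHermitian.inv
  have hC : (S⁻¹ * H * S⁻¹).PosSemidef := by
    simpa only [hSinv] using hH.conjTranspose_mul_mul_same S⁻¹
  obtain ⟨U, d, hU, hd, hspec⟩ : ∃ (U : Matrix ι ι 𝕜) (d : ι → ℝ), star U * U = 1 ∧ 0 ≤ d ∧
      S⁻¹ * H * S⁻¹ = U * diagonal (RCLike.ofReal ∘ d) * star U :=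
    ⟨_, _, Unitary.coe_star_mul_self _, hC.eigenvalues_nonneg, hC.isHermitian.spectral_theorem⟩
  have hleft : star U * S * (S⁻¹ * U) = 1 := by
    rw [Matrix.mul_assoc, mul_nonsing_inv_cancel_left _ _ hS, hU]
  refine ⟨S⁻¹ * U, d, (isUnit_iff_isUnit_det _).mpr (isUnit_det_of_left_inverse hleft), hd, ?_⟩
  rw [inv_eq_left_inv hleft, ← hSS, Matrix.mul_inv_rev]
  calc S⁻¹ * S⁻¹ * H = S⁻¹ * (S⁻¹ * H * S⁻¹) * S := by
        simp only [Matrix.mul_assoc, nonsing_inv_mul _ hS, Matrix.mul_one]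
    _ = S⁻¹ * U * diagonal (RCLike.ofReal ∘ d) * (star U * S) := by
        rw [hspec]; simp only [Matrix.mul_assoc]

theorem PosDef.exists_tendsto_inv_smul_one_add_inv_mul {N H : Matrix ι ι 𝕜} (hN : N.PosDef)
    (hH : H.PosSemidef) :
    ∃ E : Matrix ι ι 𝕜, E * (N⁻¹ * H) = N⁻¹ * H ∧
      Tendsto (fun lam : ℝ => ((lam : 𝕜) • 1 + N⁻¹ * H)⁻¹ * (N⁻¹ * H)) (𝓝[>] 0) (𝓝 E) := by
  obtain ⟨P, d, hP, hd, hB⟩ := hN.exists_inv_mul_eq_conj_diagonal hH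
  rw [hB]
  exact ⟨_, conj_diagonal_indicator_mul_conj_diagonal hP d,
    tendsto_inv_smul_one_add_conj_diagonal_mul hP hd⟩

end Matrix

namespace IsWMP

variable {m n : ℕ} {M : Matrix (Fin m) (Fin m) ℂ} {N : Matrix (Fin n) (Fin n) ℂ}
  {A : Matrix (Fin m) (Fin n) ℂ} {X : Matrix (Fin n) (Fin m) ℂ}

theorem weighted_normal_eq (hX : IsWMP M N A X) (hM : M.IsHermitian) :
    N⁻¹ * Aᴴ * M * A * X = N⁻¹ * Aᴴ * M := by
  obtain ⟨hAXA, -, hMAX, -⟩ := hX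
  calc N⁻¹ * Aᴴ * M * A * X = N⁻¹ * Aᴴ * (M * A * X)ᴴ := by
        rw [hMAX]; simp only [Matrix.mul_assoc]
    _ = N⁻¹ * (A * X * A)ᴴ * M := by
        simp only [conjTranspose_mul, hM.eq, Matrix.mul_assoc]
    _ = N⁻¹ * Aᴴ * M := by rw [hAXA]

theorem eq_weighted_conjTranspose_mul (hX : IsWMP M N A X) (hMu : IsUnit M)
    (hNh : N.IsHermitian) (hNu : IsUnit N) : X = N⁻¹ * Aᴴ * M * (M⁻¹ * Xᴴ * N * X) := by
  obtain ⟨-, hXAX, -, hNXA⟩ := hX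
  calc X = N⁻¹ * (N * X * A) * X := by
        rw [Matrix.mul_assoc N,
          nonsing_inv_mul_cancel_left _ _ ((isUnit_iff_isUnit_det N).mp hNu), hXAX]
    _ = N⁻¹ * (N * X * A)ᴴ * X := by rw [hNXA]
    _ = N⁻¹ * Aᴴ * M * (M⁻¹ * Xᴴ * N * X) := by
        simp only [conjTranspose_mul, hNh.eq, Matrix.mul_assoc,
          mul_nonsing_inv_cancel_left _ _ ((isUnit_iff_isUnit_det M).mp hMu)]

end IsWMP

/-- A†_{M,N} = lim_{λ→0+} (λI + A^# A)⁻¹ A^#, with A^# = N⁻¹ A* M. -/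
theorem stmt_2 {m n : ℕ} (A : Matrix (Fin m) (Fin n) ℂ)
    (M : Matrix (Fin m) (Fin m) ℂ) (N : Matrix (Fin n) (Fin n) ℂ)
    (hM : M.PosDef) (hN : N.PosDef)
    (X : Matrix (Fin n) (Fin m) ℂ) (hX : IsWMP M N A X) :
    Tendsto
      (fun lam : ℝ =>
        ((lam : ℂ) • (1 : Matrix (Fin n) (Fin n) ℂ) + N⁻¹ * Aᴴ * M * A)⁻¹ * (N⁻¹ * Aᴴ * M))
      (𝓝[>] (0 : ℝ)) (𝓝 X) := by
  obtain ⟨E, hE, hlim⟩ :=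
    hN.exists_tendsto_inv_smul_one_add_inv_mul (hM.posSemidef.conjTranspose_mul_mul_same A)
  rw [show N⁻¹ * (Aᴴ * M * A) = N⁻¹ * Aᴴ * M * A by simp only [Matrix.mul_assoc]] at hE hlim
  set W := M⁻¹ * Xᴴ * N * X
  have hnormal := hX.weighted_normal_eq hM.isHermitian
  have hrange : X = N⁻¹ * Aᴴ * M * W :=
    hX.eq_weighted_conjTranspose_mul hM.isUnit hN.isHermitian hN.isUnit
  have hEX : E * X = X :=
    calc E * X = E * (N⁻¹ * Aᴴ * M * A * X * W) := by rw [hnormal, ← hrange]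
      _ = N⁻¹ * Aᴴ * M * A * X * W := by
          rw [← Matrix.mul_assoc E _ W, ← Matrix.mul_assoc E _ X, hE]
      _ = X := by rw [hnormal, ← hrange]
  have hlimX : Tendsto (fun lam : ℝ => ((lam : ℂ) • 1 + N⁻¹ * Aᴴ * M * A)⁻¹ *
      (N⁻¹ * Aᴴ * M * A) * X) (𝓝[>] 0) (𝓝 (E * X)) :=
    ((continuous_id.matrix_mul continuous_const).tendsto E).comp hlim
  rw [hEX] at hlimX
  simpa only [Matrix.mul_assoc _ (N⁻¹ * Aᴴ * M * A) X, hnormal] using hlimX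
end

section
/- Let A be an m×n complex matrix with M (m×m) and N (n×n) Hermitian positive definite. Define A^# = N^{-1} A* M. Then A†_{M,N} = lim_{λ → 0+} A^# (λI + A A^#)^{-1}. -/
/-!
Write `B = N⁻¹ Aᴴ M` and `D = X M⁻¹ Xᴴ N`. The Hermitian Penrose equations turn into
`X A B = B` and `D B = X`, hence `(1 + λ D) B = X (λ + A B)`. Whenever `λ + A B` is invertible
this gives `B (λ + A B)⁻¹ = (1 + λ D)⁻¹ X`, which tends to `X` as `λ → 0`. For `λ > 0` it is
invertible because `M (λ + A B) = λ M + (Aᴴ M)ᴴ N⁻¹ (Aᴴ M)` is positive definite.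
-/

open Matrix Filter Topology
open scoped ComplexOrder

namespace Matrix

variable {𝕜 m n : Type*} [Fintype m] [Fintype n] [DecidableEq n]

section Algebra

variable [Field 𝕜] [StarRing 𝕜]

noncomputable def weightedConjTranspose (M : Matrix m m 𝕜) (N : Matrix n n 𝕜)
    (A : Matrix m n 𝕜) : Matrix n m 𝕜 :=
  N⁻¹ * Aᴴ * M

lemma eq_inv_mul_conjTranspose_mul_of_isHermitian {N P : Matrix n n 𝕜}
    (hN : N.IsHermitian) (hNu : IsUnit N) (hNP : (N * P)ᴴ = N * P) :
    P = N⁻¹ * Pᴴ * N := by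
  rw [conjTranspose_mul, hN.eq] at hNP
  rw [Matrix.mul_assoc, hNP, ← Matrix.mul_assoc,
    nonsing_inv_mul _ ((isUnit_iff_isUnit_det N).1 hNu), Matrix.one_mul]

lemma mul_mul_weightedConjTranspose {M : Matrix m m 𝕜} {N : Matrix n n 𝕜} {A : Matrix m n 𝕜}
    {X : Matrix n m 𝕜} (hN : N.IsHermitian) (hNu : IsUnit N) (hAXA : A * X * A = A)
    (hNXA : (N * X * A)ᴴ = N * X * A) :
    X * A * weightedConjTranspose M N A = weightedConjTranspose M N A := by
  have hXA := eq_inv_mul_conjTranspose_mul_of_isHermitian (P := X * A) hN hNu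
    (by rwa [← Matrix.mul_assoc])
  calc X * A * (N⁻¹ * Aᴴ * M) = N⁻¹ * (X * A)ᴴ * N * (N⁻¹ * Aᴴ * M) := by rw [← hXA]
    _ = N⁻¹ * (A * X * A)ᴴ * M := by
        simp only [conjTranspose_mul, Matrix.mul_assoc,
          mul_nonsing_inv_cancel_left _ _ ((isUnit_iff_isUnit_det N).1 hNu)]
    _ = N⁻¹ * Aᴴ * M := by rw [hAXA]

variable [DecidableEq m]

lemma mul_weightedConjTranspose {M : Matrix m m 𝕜} {N : Matrix n n 𝕜} {A : Matrix m n 𝕜}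
    {X : Matrix n m 𝕜} (hM : M.IsHermitian) (hMu : IsUnit M) (hNu : IsUnit N)
    (hXAX : X * A * X = X) (hMAX : (M * A * X)ᴴ = M * A * X) :
    X * M⁻¹ * Xᴴ * N * weightedConjTranspose M N A = X := by
  have hAX := eq_inv_mul_conjTranspose_mul_of_isHermitian (P := A * X) hM hMu
    (by rwa [← Matrix.mul_assoc])
  calc X * M⁻¹ * Xᴴ * N * (N⁻¹ * Aᴴ * M) = X * (M⁻¹ * (A * X)ᴴ * M) := by
        simp only [conjTranspose_mul, Matrix.mul_assoc,
          mul_nonsing_inv_cancel_left _ _ ((isUnit_iff_isUnit_det N).1 hNu)]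
    _ = X := by rw [← hAX, ← Matrix.mul_assoc, hXAX]

end Algebra

section PosDef

variable [DecidableEq m] [RCLike 𝕜]

lemma isUnit_smul_one_add_mul_weightedConjTranspose {M : Matrix m m 𝕜} {N : Matrix n n 𝕜}
    (hM : M.PosDef) (hN : N.PosDef) (A : Matrix m n 𝕜) {c : 𝕜} (hc : 0 < c) :
    IsUnit (c • 1 + A * weightedConjTranspose M N A) := by
  have hMK : M * (c • 1 + A * weightedConjTranspose M N A)
      = c • M + (Aᴴ * M)ᴴ * N⁻¹ * (Aᴴ * M) := by
    rw [weightedConjTranspose, Matrix.mul_add, Matrix.mul_smul, Matrix.mul_one, conjTranspose_mul,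
      conjTranspose_conjTranspose, hM.isHermitian.eq]
    simp only [Matrix.mul_assoc]
  have hpos : (M * (c • 1 + A * weightedConjTranspose M N A)).PosDef :=
    hMK ▸ (hM.smul hc).add_posSemidef (hN.inv.posSemidef.conjTranspose_mul_mul_same _)
  exact isUnit_of_mul_isUnit_right hpos.isUnit

end PosDef

section Limit

variable [DecidableEq m] [NormedField 𝕜]

lemma one_add_smul_mul_eq_mul_smul_one_add {A : Matrix m n 𝕜} {B X : Matrix n m 𝕜}
    {D : Matrix n n 𝕜} (hXAB : X * A * B = B) (hDB : D * B = X) (c : 𝕜) :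
    (1 + c • D) * B = X * (c • 1 + A * B) := by
  rw [Matrix.add_mul, Matrix.smul_mul, hDB, Matrix.one_mul, Matrix.mul_add, Matrix.mul_smul,
    Matrix.mul_one, ← Matrix.mul_assoc, hXAB, add_comm]

lemma tendsto_inv_one_add_smul (D : Matrix n n 𝕜) :
    Tendsto (fun c : 𝕜 => (1 + c • D)⁻¹) (𝓝 0) (𝓝 1) := by
  have hcont : Continuous (fun c : 𝕜 => 1 + c • D) := by fun_prop
  have hinv : ContinuousAt Inv.inv (1 : Matrix n n 𝕜) :=
    continuousAt_matrix_inv _ <| by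
      simpa [Ring.inverse_eq_inv'] using continuousAt_inv₀ one_ne_zero
  simpa [Function.comp_def] using hinv.tendsto.comp (by simpa using hcont.tendsto 0)

lemma tendsto_mul_inv_smul_one_add_mul {A : Matrix m n 𝕜} {B X : Matrix n m 𝕜}
    {D : Matrix n n 𝕜} (hXAB : X * A * B = B) (hDB : D * B = X) :
    Tendsto (fun c : 𝕜 => B * (c • 1 + A * B)⁻¹)
      (𝓝[{c | IsUnit (c • 1 + A * B)}] 0) (𝓝 X) := by
  have hdet : ∀ᶠ c : 𝕜 in 𝓝 0, IsUnit (1 + c • D).det := by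
    have hcont : Continuous (fun c : 𝕜 => (1 + c • D).det) := by fun_prop
    filter_upwards [(by simpa using hcont.tendsto 0 : Tendsto _ _ (𝓝 (1 : 𝕜))).eventually_ne
      one_ne_zero] with c hc
    exact hc.isUnit
  have hlim : Tendsto (fun c : 𝕜 => (1 + c • D)⁻¹ * X) (𝓝 0) (𝓝 X) := by
    have hmul : Continuous (fun P : Matrix n n 𝕜 => P * X) :=
      continuous_id.matrix_mul continuous_const
    simpa [Function.comp_def] using (hmul.tendsto 1).comp (tendsto_inv_one_add_smul D)
  refine (hlim.mono_left nhdsWithin_le_nhds).congr' ?_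
  filter_upwards [self_mem_nhdsWithin, nhdsWithin_le_nhds hdet] with c hK hD
  calc (1 + c • D)⁻¹ * X = (1 + c • D)⁻¹ * (X * (c • 1 + A * B) * (c • 1 + A * B)⁻¹) := by
        rw [mul_nonsing_inv_cancel_right _ _ ((isUnit_iff_isUnit_det _).1 hK)]
    _ = B * (c • 1 + A * B)⁻¹ := by
        rw [← one_add_smul_mul_eq_mul_smul_one_add hXAB hDB, Matrix.mul_assoc,
          nonsing_inv_mul_cancel_left _ _ hD]

end Limit

end Matrix

/-- A†_{M,N} = lim_{λ→0+} A^# (λI + A A^#)⁻¹, with A^# = N⁻¹ A* M. -/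
theorem stmt_3 {m n : ℕ} (A : Matrix (Fin m) (Fin n) ℂ)
    (M : Matrix (Fin m) (Fin m) ℂ) (N : Matrix (Fin n) (Fin n) ℂ)
    (hM : M.PosDef) (hN : N.PosDef)
    (X : Matrix (Fin n) (Fin m) ℂ) (hX : IsWMP M N A X) :
    Tendsto
      (fun lam : ℝ =>
        (N⁻¹ * Aᴴ * M) * ((lam : ℂ) • (1 : Matrix (Fin m) (Fin m) ℂ) + A * (N⁻¹ * Aᴴ * M))⁻¹)
      (𝓝[>] (0 : ℝ)) (𝓝 X) := by
  obtain ⟨hAXA, hXAX, hMAX, hNXA⟩ := hX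
  have hlim := tendsto_mul_inv_smul_one_add_mul
    (mul_mul_weightedConjTranspose hN.isHermitian hN.isUnit hAXA hNXA)
    (mul_weightedConjTranspose hM.isHermitian hM.isUnit hN.isUnit hXAX hMAX)
  refine hlim.comp (tendsto_nhdsWithin_iff.2 ⟨?_, ?_⟩)
  · exact (Complex.continuous_ofReal.tendsto' 0 0 Complex.ofReal_zero).mono_left
      nhdsWithin_le_nhds
  · filter_upwards [self_mem_nhdsWithin] with lam (hlam : 0 < lam)
    exact isUnit_smul_one_add_mul_weightedConjTranspose hM hN A (Complex.zero_lt_real.2 hlam)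
end

section
/- Let A be an n×n complex matrix and N an n×n Hermitian positive definite matrix. Then A A^# = A^# A if and only if A†_{N,N} (A†_{N,N})^# = (A†_{N,N})^# A†_{N,N}, where for any n×n matrix B, B^# = N^{-1} B* N. -/
/-!
Write `N = B* B` with `B` invertible. Conjugation `M ↦ B M B⁻¹` turns the weighted adjoint
`M^# = N⁻¹ M* N` into the ordinary adjoint `(B M B⁻¹)*`, and the Penrose equations with weights
`(N, N)` into the ordinary ones, so `B X B⁻¹` is the Moore–Penrose inverse of `B A B⁻¹`. It
remains to see that in any monoid with involution the Moore–Penrose inverse `x` of `a` is normal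
when `a` is: `x x*` and `x* x` are the Moore–Penrose inverses of `a* a` and `a a*`, which coincide,
and Moore–Penrose inverses are unique. The converse follows since `a` is the Moore–Penrose inverse
of `x`.
-/

open Matrix Filter Topology
open scoped ComplexOrder

section MoorePenrose

variable {R : Type*} [Monoid R] [StarMul R] {a x y : R}

structure IsMoorePenroseInverse (a x : R) : Prop where
  mul_mul_self : a * x * a = a
  mul_mul_self' : x * a * x = x
  isSelfAdjoint_mul : IsSelfAdjoint (a * x)
  isSelfAdjoint_mul' : IsSelfAdjoint (x * a)

theorem IsMoorePenroseInverse.symm (h : IsMoorePenroseInverse a x) : IsMoorePenroseInverse x a :=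
  ⟨h.mul_mul_self', h.mul_mul_self, h.isSelfAdjoint_mul', h.isSelfAdjoint_mul⟩

protected theorem IsMoorePenroseInverse.star (h : IsMoorePenroseInverse a x) :
    IsMoorePenroseInverse (star a) (star x) where
  mul_mul_self := by rw [← star_mul, ← star_mul, ← mul_assoc, h.mul_mul_self]
  mul_mul_self' := by rw [← star_mul, ← star_mul, ← mul_assoc, h.mul_mul_self']
  isSelfAdjoint_mul := by rw [← star_mul]; exact IsSelfAdjoint.star_iff.mpr h.isSelfAdjoint_mul'
  isSelfAdjoint_mul' := by rw [← star_mul]; exact IsSelfAdjoint.star_iff.mpr h.isSelfAdjoint_mul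

theorem IsMoorePenroseInverse.mul_star_mul_star (h : IsMoorePenroseInverse a x) :
    x * star x * star a = x := by
  rw [mul_assoc, ← star_mul, h.isSelfAdjoint_mul.star_eq, ← mul_assoc, h.mul_mul_self']

theorem IsMoorePenroseInverse.star_mul_star_mul (h : IsMoorePenroseInverse a x) :
    star a * star x * x = x := by
  rw [← star_mul, h.isSelfAdjoint_mul'.star_eq, h.mul_mul_self']

theorem IsMoorePenroseInverse.star_mul_mul (h : IsMoorePenroseInverse a x) :
    star a * a * x = star a := by
  rw [mul_assoc, ← h.isSelfAdjoint_mul.star_eq, ← star_mul, h.mul_mul_self]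

theorem IsMoorePenroseInverse.mul_mul_star (h : IsMoorePenroseInverse a x) :
    x * a * star a = star a := by
  rw [← h.isSelfAdjoint_mul'.star_eq, ← star_mul, ← mul_assoc, h.mul_mul_self]

theorem IsMoorePenroseInverse.unique (hx : IsMoorePenroseInverse a x)
    (hy : IsMoorePenroseInverse a y) : x = y :=
  calc x = x * star x * (star a * star y * star a) := by
        rw [hy.star.mul_mul_self, hx.mul_star_mul_star]
    _ = x * star (a * x) * star (a * y) := by simp only [star_mul, mul_assoc]
    _ = x * a * y := by
      rw [hx.isSelfAdjoint_mul.star_eq, hy.isSelfAdjoint_mul.star_eq, ← mul_assoc x a x,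
        hx.mul_mul_self', mul_assoc]
    _ = star (x * a) * star (y * a) * y := by
      rw [hx.isSelfAdjoint_mul'.star_eq, hy.isSelfAdjoint_mul'.star_eq,
        mul_assoc (x * a), hy.mul_mul_self']
    _ = star a * star x * star a * star y * y := by simp only [star_mul, mul_assoc]
    _ = y := by rw [hx.star.mul_mul_self, hy.star_mul_star_mul]

theorem IsMoorePenroseInverse.star_mul_self (h : IsMoorePenroseInverse a x) :
    IsMoorePenroseInverse (star a * a) (x * star x) := by
  have hleft : star a * a * (x * star x) = x * a := by
    rw [← mul_assoc, h.star_mul_mul, ← star_mul, h.isSelfAdjoint_mul'.star_eq]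
  have hright : x * star x * (star a * a) = x * a := by
    rw [← mul_assoc, h.mul_star_mul_star]
  refine ⟨?_, ?_, hleft ▸ h.isSelfAdjoint_mul', hright ▸ h.isSelfAdjoint_mul'⟩
  · rw [hleft, ← mul_assoc, h.mul_mul_star]
  · rw [hright, ← mul_assoc, h.mul_mul_self']

theorem IsMoorePenroseInverse.mul_star_self (h : IsMoorePenroseInverse a x) :
    IsMoorePenroseInverse (a * star a) (star x * x) := by
  simpa only [star_star] using h.star.star_mul_self

theorem IsMoorePenroseInverse.isStarNormal (h : IsMoorePenroseInverse a x) [IsStarNormal a] :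
    IsStarNormal x :=
  ⟨h.mul_star_self.unique (star_comm_self' a ▸ h.star_mul_self)⟩

theorem IsMoorePenroseInverse.isStarNormal_iff (h : IsMoorePenroseInverse a x) :
    IsStarNormal a ↔ IsStarNormal x :=
  ⟨fun _ ↦ h.isStarNormal, fun _ ↦ h.symm.isStarNormal⟩

end MoorePenrose

theorem Units.conj_mul_conj {R : Type*} [Monoid R] (u : Rˣ) (a b : R) :
    ↑u * a * ↑u⁻¹ * (↑u * b * ↑u⁻¹) = ↑u * (a * b) * ↑u⁻¹ := by
  simp [mul_assoc]

section WeightedStar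

variable {R : Type*} [Monoid R] [StarMul R]

def weightedStar (w : Rˣ) (a : R) : R := ↑w⁻¹ * star a * ↑w

theorem Units.conj_weightedStar (u : Rˣ) (a : R) :
    ↑u * weightedStar (star u * u) a * ↑u⁻¹ = star (↑u * a * ↑u⁻¹) := by
  simp [weightedStar, mul_assoc]

theorem Units.isStarNormal_conj_iff (u : Rˣ) (a : R) :
    IsStarNormal (↑u * a * ↑u⁻¹) ↔ Commute a (weightedStar (star u * u) a) := by
  rw [isStarNormal_iff, commute_iff_eq, commute_iff_eq, ← u.conj_weightedStar, u.conj_mul_conj,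
    u.conj_mul_conj, Units.mul_left_inj, Units.mul_right_inj, eq_comm]

theorem Units.isSelfAdjoint_conj_iff (u : Rˣ) (p : R) :
    IsSelfAdjoint (↑u * p * ↑u⁻¹) ↔ IsSelfAdjoint (↑(star u * u) * p) := by
  rw [← u.isUnit.isSelfAdjoint_conjugate_iff']
  simp [mul_assoc]

theorem Units.isMoorePenroseInverse_conj (u : Rˣ) {a x : R} (h₁ : a * x * a = a)
    (h₂ : x * a * x = x) (h₃ : IsSelfAdjoint (↑(star u * u) * a * x))
    (h₄ : IsSelfAdjoint (↑(star u * u) * x * a)) :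
    IsMoorePenroseInverse (↑u * a * ↑u⁻¹) (↑u * x * ↑u⁻¹) where
  mul_mul_self := by rw [u.conj_mul_conj, u.conj_mul_conj, h₁]
  mul_mul_self' := by rw [u.conj_mul_conj, u.conj_mul_conj, h₂]
  isSelfAdjoint_mul := by rw [u.conj_mul_conj, u.isSelfAdjoint_conj_iff, ← mul_assoc]; exact h₃
  isSelfAdjoint_mul' := by rw [u.conj_mul_conj, u.isSelfAdjoint_conj_iff, ← mul_assoc]; exact h₄

end WeightedStar

theorem Matrix.PosDef.exists_units_eq_star_mul_self {n 𝕜 : Type*} [Fintype n] [DecidableEq n]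
    [RCLike 𝕜] {N : Matrix n n 𝕜} (hN : N.PosDef) : ∃ u : (Matrix n n 𝕜)ˣ, ↑(star u * u) = N := by
  open scoped MatrixOrder in
  obtain ⟨B, rfl⟩ := CStarAlgebra.nonneg_iff_eq_star_mul_self.mp hN.posSemidef.nonneg
  exact ⟨(isUnit_of_mul_isUnit_right hN.isUnit).unit, rfl⟩

/-- A A^# = A^# A iff A†_{N,N} (A†_{N,N})^# = (A†_{N,N})^# A†_{N,N},
where B^# = N⁻¹ B* N. -/
theorem stmt_7 {n : ℕ} (A N : Matrix (Fin n) (Fin n) ℂ) (hN : N.PosDef)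
    (X : Matrix (Fin n) (Fin n) ℂ) (hX : IsWMP N N A X) :
    A * (N⁻¹ * Aᴴ * N) = (N⁻¹ * Aᴴ * N) * A ↔
      X * (N⁻¹ * Xᴴ * N) = (N⁻¹ * Xᴴ * N) * X := by
  obtain ⟨u, rfl⟩ := hN.exists_units_eq_star_mul_self
  have hAX := u.isMoorePenroseInverse_conj hX.1 hX.2.1 hX.2.2.1 hX.2.2.2
  rw [← coe_units_inv]
  exact (u.isStarNormal_conj_iff A).symm.trans <|
    hAX.isStarNormal_iff.trans (u.isStarNormal_conj_iff X)
end

section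
/- Let A be an n×n complex matrix and N Hermitian positive definite. If A is weighted normal with respect to N (i.e., A A^# = A^# A with A^# = N^{-1} A* N) and λ ≠ 0, then λ is an eigenvalue of A if and only if 1/λ is an eigenvalue of the weighted Moore-Penrose inverse A†_{N,N}. -/
open Matrix Filter Topology
open scoped ComplexOrder

namespace Matrix

variable {ι K : Type*} [Fintype ι] [Field K] [StarRing K]

theorem star_mulVec_dotProduct_mulVec (M N : Matrix ι ι K) (u v : ι → K) :
    star (M *ᵥ u) ⬝ᵥ N *ᵥ v = star u ⬝ᵥ (Mᴴ * N) *ᵥ v := by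
  simp only [star_mulVec, dotProduct_mulVec, vecMul_vecMul]

theorem star_mulVec_dotProduct_mulVec_of_isHermitian_mul {N P : Matrix ι ι K}
    (hN : N.IsHermitian) (hP : (N * P).IsHermitian) (u v : ι → K) :
    star (P *ᵥ u) ⬝ᵥ N *ᵥ v = star u ⬝ᵥ N *ᵥ (P *ᵥ v) := by
  rw [star_mulVec_dotProduct_mulVec, mulVec_mulVec, ← hP.eq, conjTranspose_mul, hN.eq]

theorem PosDef.isUnit_det [PartialOrder K] [DecidableEq ι] {N : Matrix ι ι K} (hN : N.PosDef) :
    IsUnit N.det :=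
  (isUnit_iff_isUnit_det N).mp hN.isUnit

theorem PosDef.eq_zero_of_star_dotProduct_mulVec_self_eq_zero [PartialOrder K] {N : Matrix ι ι K}
    (hN : N.PosDef) {y : ι → K} (hy : star y ⬝ᵥ N *ᵥ y = 0) : y = 0 := by
  by_contra hy0
  exact (hN.dotProduct_mulVec_pos hy0).ne' hy

theorem mulVec_eq_self_of_orthogonal_ker [PartialOrder K] {N P : Matrix ι ι K}
    (hN : N.PosDef) (hPP : P * P = P) (hP : (N * P).IsHermitian) {v : ι → K}
    (hv : ∀ z, P *ᵥ z = 0 → star z ⬝ᵥ N *ᵥ v = 0) : P *ᵥ v = v := by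
  set z := v - P *ᵥ v with hz
  have hPz : P *ᵥ z = 0 := by rw [hz, mulVec_sub, mulVec_mulVec, hPP, sub_self]
  have hzPv : star z ⬝ᵥ N *ᵥ (P *ᵥ v) = 0 := by
    rw [← star_mulVec_dotProduct_mulVec_of_isHermitian_mul hN.isHermitian hP, hPz]
    simp
  have hzz : star z ⬝ᵥ N *ᵥ z = 0 := by
    rw [hz, mulVec_sub, dotProduct_sub, ← hz, hv z hPz, hzPv, sub_zero]
  exact (sub_eq_zero.mp (hN.eq_zero_of_star_dotProduct_mulVec_self_eq_zero hzz)).symm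

variable [DecidableEq ι]

theorem star_weightedAdjoint_mulVec_dotProduct {N : Matrix ι ι K} (hN : N.IsHermitian)
    (hNdet : IsUnit N.det) (A : Matrix ι ι K) (u v : ι → K) :
    star ((N⁻¹ * Aᴴ * N) *ᵥ u) ⬝ᵥ N *ᵥ v = star u ⬝ᵥ N *ᵥ (A *ᵥ v) := by
  have : (N⁻¹ * Aᴴ * N)ᴴ * N = N * A := by
    simp only [conjTranspose_mul, conjTranspose_conjTranspose, conjTranspose_nonsing_inv, hN.eq]
    rw [← mul_assoc, nonsing_inv_mul_cancel_right _ _ hNdet]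
  rw [star_mulVec_dotProduct_mulVec, this, mulVec_mulVec]

theorem star_dotProduct_weightedAdjoint_mulVec {N : Matrix ι ι K} (hNdet : IsUnit N.det)
    (A : Matrix ι ι K) (u v : ι → K) :
    star u ⬝ᵥ N *ᵥ ((N⁻¹ * Aᴴ * N) *ᵥ v) = star (A *ᵥ u) ⬝ᵥ N *ᵥ v := by
  rw [star_mulVec_dotProduct_mulVec, mulVec_mulVec, ← mul_assoc, ← mul_assoc,
    mul_nonsing_inv _ hNdet, one_mul]

theorem weightedAdjoint_mulVec_eq_zero_of_forall_orthogonal [PartialOrder K] {N A : Matrix ι ι K}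
    (hN : N.PosDef) {z : ι → K} (hz : ∀ w, star z ⬝ᵥ N *ᵥ (A *ᵥ w) = 0) :
    (N⁻¹ * Aᴴ * N) *ᵥ z = 0 := by
  refine hN.eq_zero_of_star_dotProduct_mulVec_self_eq_zero ?_
  rw [star_weightedAdjoint_mulVec_dotProduct hN.isHermitian hN.isUnit_det]
  exact hz _

theorem mulVec_eq_zero_iff_of_weightedNormal [PartialOrder K] {N A : Matrix ι ι K}
    (hN : N.PosDef) (hA : A * (N⁻¹ * Aᴴ * N) = (N⁻¹ * Aᴴ * N) * A) (z : ι → K) :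
    A *ᵥ z = 0 ↔ (N⁻¹ * Aᴴ * N) *ᵥ z = 0 := by
  have hnorm : star (A *ᵥ z) ⬝ᵥ N *ᵥ (A *ᵥ z)
      = star ((N⁻¹ * Aᴴ * N) *ᵥ z) ⬝ᵥ N *ᵥ ((N⁻¹ * Aᴴ * N) *ᵥ z) := by
    rw [← star_dotProduct_weightedAdjoint_mulVec hN.isUnit_det A z (A *ᵥ z),
      star_weightedAdjoint_mulVec_dotProduct hN.isHermitian hN.isUnit_det A z]
    congr 2
    rw [mulVec_mulVec, mulVec_mulVec, hA]
  constructor <;> intro h <;> refine hN.eq_zero_of_star_dotProduct_mulVec_self_eq_zero ?_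
  · rw [← hnorm, h]; simp
  · rw [hnorm, h]; simp

section WeightedMoorePenrose

variable [PartialOrder K] {N A X : Matrix ι ι K}

theorem weightedMPInv_mulVec_eq_inv_smul (hN : N.PosDef)
    (hA : A * (N⁻¹ * Aᴴ * N) = (N⁻¹ * Aᴴ * N) * A) (hAXA : A * X * A = A)
    (hXAX : X * A * X = X) (hXA : (N * X * A)ᴴ = N * X * A) {lam : K} (hlam : lam ≠ 0)
    {x : ι → K} (hAx : A *ᵥ x = lam • x) : X *ᵥ x = lam⁻¹ • x := by
  have hXAx : (X * A) *ᵥ x = x := by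
    refine mulVec_eq_self_of_orthogonal_ker hN (by rw [← mul_assoc, hXAX])
      (by rw [← mul_assoc]; exact hXA) fun z hz => ?_
    have hAz : A *ᵥ z = 0 := by rw [← hAXA, mul_assoc, ← mulVec_mulVec, hz, mulVec_zero]
    rw [← inv_smul_smul₀ hlam x, ← hAx, mulVec_smul, dotProduct_smul,
      ← star_weightedAdjoint_mulVec_dotProduct hN.isHermitian hN.isUnit_det,
      (mulVec_eq_zero_iff_of_weightedNormal hN hA z).mp hAz]
    simp
  rw [← mulVec_mulVec, hAx, mulVec_smul] at hXAx
  exact (eq_inv_smul_iff₀ hlam).mpr hXAx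

theorem mulVec_eq_smul_of_weightedMPInv_mulVec_eq_inv_smul (hN : N.PosDef)
    (hA : A * (N⁻¹ * Aᴴ * N) = (N⁻¹ * Aᴴ * N) * A) (hAXA : A * X * A = A)
    (hXAX : X * A * X = X) (hXA : (N * X * A)ᴴ = N * X * A) (hAX : (N * A * X)ᴴ = N * A * X)
    {lam : K} (hlam : lam ≠ 0) {x : ι → K} (hXx : X *ᵥ x = lam⁻¹ • x) :
    A *ᵥ x = lam • x := by
  have hXAx : (X * A) *ᵥ x = x := by
    rw [← smul_inv_smul₀ hlam x, ← hXx, mulVec_smul, mulVec_mulVec, hXAX]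
  have hAX_sa : (N * (A * X)).IsHermitian := by rw [← mul_assoc]; exact hAX
  have hAXx : (A * X) *ᵥ x = x := by
    refine mulVec_eq_self_of_orthogonal_ker hN (by rw [← mul_assoc, hAXA]) hAX_sa
      fun z hz => ?_
    have hAz : A *ᵥ z = 0 := by
      refine (mulVec_eq_zero_iff_of_weightedNormal hN hA z).mpr
        (weightedAdjoint_mulVec_eq_zero_of_forall_orthogonal hN fun w => ?_)
      rw [← hAXA, ← mulVec_mulVec,
        ← star_mulVec_dotProduct_mulVec_of_isHermitian_mul hN.isHermitian hAX_sa, hz]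
      simp
    have hXA_sa : (N * (X * A)).IsHermitian := by rw [← mul_assoc]; exact hXA
    rw [← hXAx, ← star_mulVec_dotProduct_mulVec_of_isHermitian_mul hN.isHermitian hXA_sa,
      ← mulVec_mulVec, hAz]
    simp
  rw [← mulVec_mulVec, hXx, mulVec_smul] at hAXx
  exact (inv_smul_eq_iff₀ hlam).mp hAXx

end WeightedMoorePenrose

end Matrix

/-- if A is weighted normal w.r.t. N and λ ≠ 0, then λ is an eigenvalue
of A iff 1/λ is an eigenvalue of A†_{N,N}. -/
theorem stmt_9 {n : ℕ} (A N : Matrix (Fin n) (Fin n) ℂ) (hN : N.PosDef)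
    (hnormal : A * (N⁻¹ * Aᴴ * N) = (N⁻¹ * Aᴴ * N) * A)
    (X : Matrix (Fin n) (Fin n) ℂ) (hX : IsWMP N N A X)
    (lam : ℂ) (hlam : lam ≠ 0) :
    (∃ x : Fin n → ℂ, x ≠ 0 ∧ A.mulVec x = lam • x) ↔
      (∃ x : Fin n → ℂ, x ≠ 0 ∧ X.mulVec x = lam⁻¹ • x) := by
  obtain ⟨hAXA, hXAX, hAX, hXA⟩ := hX
  constructor
  · rintro ⟨x, hx, hAx⟩
    exact ⟨x, hx, weightedMPInv_mulVec_eq_inv_smul hN hnormal hAXA hXAX hXA hlam hAx⟩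
  · rintro ⟨x, hx, hXx⟩
    exact ⟨x, hx,
      mulVec_eq_smul_of_weightedMPInv_mulVec_eq_inv_smul hN hnormal hAXA hXAX hXA hAX hlam hXx⟩
end

section
/- Let A be an n×n complex matrix and M, N Hermitian positive definite n×n matrices. Then 0 ∈ W(A) if and only if 0 ∈ W(A†_{M,N}), where W(B) = {⟨Bx, x⟩ : x ∈ ℂⁿ, ‖x‖ = 1} is the numerical range. -/
/-!
If `X A X = X`, then either `X` is singular, and a unit vector of its kernel is isotropic for `X`,
or `X` is invertible with inverse `A`, and an isotropic unit vector `x` of `A` yields the isotropic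
vector `A x` of `X`, because `⟨X (A x), A x⟩ = ⟨x, A x⟩` is the conjugate of `⟨A x, x⟩ = 0`.
Both equations `A X A = A` and `X A X = X` hold for the weighted Moore-Penrose inverse, so this
applies in both directions.
-/

open Matrix Filter Topology
open scoped ComplexOrder

namespace Matrix

variable {ι 𝕜 : Type*} [Fintype ι] [RCLike 𝕜]

def numericalRange (B : Matrix ι ι 𝕜) : Set 𝕜 :=
  {z | ∃ x : ι → 𝕜, star x ⬝ᵥ x = 1 ∧ star x ⬝ᵥ B *ᵥ x = z}

theorem zero_mem_numericalRange_iff {B : Matrix ι ι 𝕜} :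
    0 ∈ numericalRange B ↔ ∃ v ≠ 0, star v ⬝ᵥ B *ᵥ v = 0 := by
  constructor
  · rintro ⟨x, hx, hBx⟩
    refine ⟨x, ?_, hBx⟩
    rintro rfl
    simp at hx
  · rintro ⟨v, hv, hBv⟩
    obtain ⟨r, hr, hvv⟩ := RCLike.pos_iff_exists_ofReal.mp (dotProduct_star_self_pos_iff.mpr hv)
    have ht : star ((√r)⁻¹ : 𝕜) = (√r)⁻¹ := by simp
    refine ⟨((√r)⁻¹ : 𝕜) • v, ?_, ?_⟩
    · rw [star_smul, smul_dotProduct, dotProduct_smul, ← hvv, ht, smul_eq_mul, smul_eq_mul,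
        ← mul_assoc]
      norm_cast
      rw [← mul_inv, Real.mul_self_sqrt hr.le, inv_mul_cancel₀ hr.ne']
    · rw [mulVec_smul, star_smul, smul_dotProduct, dotProduct_smul, hBv, smul_zero, smul_zero]

variable [DecidableEq ι]

theorem zero_mem_numericalRange_of_det_eq_zero {B : Matrix ι ι 𝕜} (h : B.det = 0) :
    0 ∈ numericalRange B := by
  obtain ⟨v, hv, hBv⟩ := exists_mulVec_eq_zero_iff.mpr h
  exact zero_mem_numericalRange_iff.mpr ⟨v, hv, by rw [hBv, dotProduct_zero]⟩

theorem zero_mem_numericalRange_of_mul_eq_one {A X : Matrix ι ι 𝕜} (hXA : X * A = 1)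
    (hA : 0 ∈ numericalRange A) : 0 ∈ numericalRange X := by
  obtain ⟨x, hx, hAx⟩ := zero_mem_numericalRange_iff.mp hA
  have hXAx : X *ᵥ (A *ᵥ x) = x := by rw [mulVec_mulVec, hXA, one_mulVec]
  refine zero_mem_numericalRange_iff.mpr ⟨A *ᵥ x, ?_, ?_⟩
  · rintro hAx0
    rw [hAx0, mulVec_zero] at hXAx
    exact hx hXAx.symm
  · rw [hXAx, star_dotProduct, hAx, star_zero]

theorem zero_mem_numericalRange_of_mul_mul_self {A X : Matrix ι ι 𝕜} (hXAX : X * A * X = X)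
    (hA : 0 ∈ numericalRange A) : 0 ∈ numericalRange X := by
  by_cases hdet : X.det = 0
  · exact zero_mem_numericalRange_of_det_eq_zero hdet
  · have hX : IsUnit X := (isUnit_iff_isUnit_det X).mpr (Ne.isUnit hdet)
    have hXA : X * A = 1 := hX.mul_right_cancel (by rw [hXAX, one_mul])
    exact zero_mem_numericalRange_of_mul_eq_one hXA hA

end Matrix

theorem stmt_17_general {n : ℕ} (A M N : Matrix (Fin n) (Fin n) ℂ)
    (X : Matrix (Fin n) (Fin n) ℂ) (hX : IsWMP M N A X) :
    (∃ x : Fin n → ℂ, star x ⬝ᵥ x = 1 ∧ star x ⬝ᵥ A.mulVec x = 0) ↔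
      (∃ x : Fin n → ℂ, star x ⬝ᵥ x = 1 ∧ star x ⬝ᵥ X.mulVec x = 0) :=
  ⟨zero_mem_numericalRange_of_mul_mul_self hX.2.1, zero_mem_numericalRange_of_mul_mul_self hX.1⟩

/-- 0 ∈ W(A) iff 0 ∈ W(A†_{M,N}), where
W(B) = {⟨Bx, x⟩ : ‖x‖ = 1}. -/
theorem stmt_17 {n : ℕ} (A M N : Matrix (Fin n) (Fin n) ℂ)
    (hM : M.PosDef) (hN : N.PosDef)
    (X : Matrix (Fin n) (Fin n) ℂ) (hX : IsWMP M N A X) :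
    (∃ x : Fin n → ℂ, star x ⬝ᵥ x = 1 ∧ star x ⬝ᵥ A.mulVec x = 0) ↔
      (∃ x : Fin n → ℂ, star x ⬝ᵥ x = 1 ∧ star x ⬝ᵥ X.mulVec x = 0) :=
  stmt_17_general A M N X hX
end

section
/- Let z₁, ..., zₙ be nonzero complex numbers and suppose 0 = α₁z₁ + ... + αₙzₙ for some nonnegative reals α₁, ..., αₙ with α₁ + ... + αₙ = 1. Then there exist nonnegative reals β₁, ..., βₙ with β₁ + ... + βₙ = 1 such that 0 = β₁/z₁ + ... + βₙ/zₙ. -/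
/-- if 0 is a convex combination of nonzero complex numbers z₁,…,zₙ,
then 0 is also a convex combination of their reciprocals. -/
theorem stmt_19 {n : ℕ} (z : Fin n → ℂ) (hz : ∀ i, z i ≠ 0)
    (a : Fin n → ℝ) (ha : ∀ i, 0 ≤ a i) (hsum : ∑ i, a i = 1)
    (h0 : ∑ i, (a i : ℂ) * z i = 0) :
    ∃ b : Fin n → ℝ, (∀ i, 0 ≤ b i) ∧ ∑ i, b i = 1 ∧
      ∑ i, (b i : ℂ) * (z i)⁻¹ = 0 := by
  set S : ℝ := ∑ i, a i * Complex.normSq (z i) with hS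
  have hex : ∃ i : Fin n, 0 < a i := by
    by_contra h
    push_neg at h
    have : ∑ i, a i = 0 := Finset.sum_eq_zero fun i _ => le_antisymm (h i) (ha i)
    rw [this] at hsum; norm_num at hsum
  obtain ⟨j, hj⟩ := hex
  have hSpos : 0 < S := by
    apply Finset.sum_pos' (fun i _ => mul_nonneg (ha i) (Complex.normSq_nonneg _))
    exact ⟨j, Finset.mem_univ j, mul_pos hj (Complex.normSq_pos.mpr (hz j))⟩
  refine ⟨fun i => a i * Complex.normSq (z i) / S, fun i => ?_, ?_, ?_⟩
  · exact div_nonneg (mul_nonneg (ha i) (Complex.normSq_nonneg _)) hSpos.le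
  · rw [← Finset.sum_div, ← hS, div_self hSpos.ne']
  · have key : ∀ i : Fin n, ((a i * Complex.normSq (z i) / S : ℝ) : ℂ) * (z i)⁻¹
        = (S : ℂ)⁻¹ * ((a i : ℂ) * (starRingEnd ℂ) (z i)) := by
      intro i
      have h1 : ((Complex.normSq (z i) : ℝ) : ℂ) = z i * (starRingEnd ℂ) (z i) :=
        (Complex.mul_conj (z i)).symm
      push_cast
      rw [h1]
      field_simp [hz i]
    rw [Finset.sum_congr rfl fun i _ => key i, ← Finset.mul_sum]
    have : ∑ i, (a i : ℂ) * (starRingEnd ℂ) (z i)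
        = (starRingEnd ℂ) (∑ i, (a i : ℂ) * z i) := by
      rw [map_sum]
      exact Finset.sum_congr rfl fun i _ => by simp [Complex.conj_ofReal]
    rw [this, h0, map_zero, mul_zero]
end
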